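/- Index reduction is exact: Let q, v : [0, T] → ℝ^{n_q} be differentiable with q'(t) = v(t) and v'(t) = f_v(q(t), v(t), u(t)) − M(q(t))^{-1} n(q(t)) D(q(t))^{-1} φ(x(t), u(t)) for a given function u, and suppose n(q(t)) ≠ 0 for all t ∈ [0, T]. If the initial value is consistently initialized, i.e., f_c(q(0)) = 0 and n(q(0))^⊤ v(0) = 0, then f_c(q(t)) = 0 and n(q(t))^⊤ v(t) = 0 for all t ∈ [0, T]. In other words, solutions of the index-reduced ODE (Eq. (19) of the paper) with consistent initialization satisfy the algebraic constraint of the index-3 DAE for all times. -/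

import Mathlib

/-!
Along a solution, the velocity constraint `g(t) = n(q)ᵀ v` has derivative
`∇²f_c(q)[v, v] + n(q)ᵀ v'`; substituting the index-reduced `v'` and using `n(q)ᵀ M(q)⁻¹ n(q) = D(q)`
(positive, as `M(q)⁻¹` is positive definite and `n(q) ≠ 0`) this is `φ - φ = 0`, so `g ≡ g(0) = 0`.
Then `(f_c ∘ q)' = n(q)ᵀ v = g = 0`, so `f_c(q(t)) = f_c(q(0)) = 0`.
-/

open Matrix Set

theorem eq_of_hasDerivWithinAt_zero_Icc {E : Type*} [NormedAddCommGroup E] [NormedSpace ℝ E]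
    {f : ℝ → E} {a b : ℝ} (hf : ∀ t ∈ Icc a b, HasDerivWithinAt f 0 (Icc a b) t) :
    ∀ t ∈ Icc a b, f t = f a := fun t ht => by
  simpa [sub_eq_zero] using
    norm_image_sub_le_of_norm_deriv_le_segment' hf (C := 0) (fun _ _ => norm_zero.le) t ht

theorem Matrix.PosDef.dotProduct_inv_mulVec_pos {ι : Type*} [Fintype ι] [DecidableEq ι]
    {A : Matrix ι ι ℝ} (hA : A.PosDef) {x : ι → ℝ} (hx : x ≠ 0) :
    0 < x ⬝ᵥ (A⁻¹ *ᵥ x) := by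
  simpa using hA.inv.dotProduct_mulVec_pos hx

theorem dotProduct_sub_div_smul_of_dotProduct_eq {ι : Type*} [Fintype ι] {x y z : ι → ℝ}
    {c d : ℝ} (hxz : x ⬝ᵥ z = d) (hd : d ≠ 0) :
    x ⬝ᵥ (y - (c / d) • z) = x ⬝ᵥ y - c := by
  rw [dotProduct_sub, dotProduct_smul, hxz, smul_eq_mul, div_mul_cancel₀ _ hd]

theorem DifferentiableAt.hasDerivWithinAt_clm_apply_comp {E F : Type*} [NormedAddCommGroup E]
    [NormedSpace ℝ E] [NormedAddCommGroup F] [NormedSpace ℝ F] {L : E → E →L[ℝ] F}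
    {γ w : ℝ → E} {s : Set ℝ} {t : ℝ} {a : E} (hL : DifferentiableAt ℝ L (γ t))
    (hγ : HasDerivWithinAt γ (w t) s t) (hw : HasDerivWithinAt w a s t) :
    HasDerivWithinAt (fun τ => L (γ τ) (w τ))
      (fderiv ℝ (fun r => L r (w t)) (γ t) (w t) + L (γ t) a) s t := by
  have hLw : HasFDerivAt (fun r => L r (w t)) ((fderiv ℝ L (γ t)).flip (w t)) (γ t) := by
    simpa using hL.hasFDerivAt.clm_apply (hasFDerivAt_const (w t) (γ t))
  rw [hLw.fderiv]
  exact (hL.hasFDerivAt.comp_hasDerivWithinAt t hγ).clm_apply hw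

theorem hasDerivWithinAt_gradient_dotProduct {ι : Type*} [Fintype ι] {f : (ι → ℝ) → ℝ}
    (hf : ContDiff ℝ 2 f) {n : (ι → ℝ) → ι → ℝ} (hn : ∀ p w, fderiv ℝ f p w = n p ⬝ᵥ w)
    {γ w : ℝ → ι → ℝ} {s : Set ℝ} {t : ℝ} {a : ι → ℝ}
    (hγ : HasDerivWithinAt γ (w t) s t) (hw : HasDerivWithinAt w a s t) :
    HasDerivWithinAt (fun τ => n (γ τ) ⬝ᵥ w τ)
      (fderiv ℝ (fun r => n r ⬝ᵥ w t) (γ t) (w t) + n (γ t) ⬝ᵥ a) s t := by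
  have hdf : Differentiable ℝ (fderiv ℝ f) :=
    (hf.fderiv_right (by norm_num)).differentiable one_ne_zero
  simpa only [hn] using (hdf (γ t)).hasDerivWithinAt_clm_apply_comp hγ hw

theorem stmt_7_general (nq nu : ℕ)
    (fc : (Fin nq → ℝ) → ℝ) (hfc : ContDiff ℝ 2 fc)
    (n : (Fin nq → ℝ) → Fin nq → ℝ)
    (hn : ∀ p w, fderiv ℝ fc p w = n p ⬝ᵥ w)
    (M : (Fin nq → ℝ) → Matrix (Fin nq) (Fin nq) ℝ)
    (hM : ∀ p, (M p).PosDef)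
    (fv : (Fin nq → ℝ) → (Fin nq → ℝ) → (Fin nu → ℝ) → Fin nq → ℝ)
    (D : (Fin nq → ℝ) → ℝ)
    (hD : ∀ p, D p = n p ⬝ᵥ ((M p)⁻¹ *ᵥ n p))
    (φf : (Fin nq → ℝ) → (Fin nq → ℝ) → (Fin nu → ℝ) → ℝ)
    (hφ : ∀ p w uu, φf p w uu = n p ⬝ᵥ fv p w uu + fderiv ℝ (fun r => n r ⬝ᵥ w) p w)
    (T : ℝ)
    (q v : ℝ → Fin nq → ℝ) (u : ℝ → Fin nu → ℝ)
    (hq : ∀ t ∈ Set.Icc 0 T, HasDerivWithinAt q (v t) (Set.Icc 0 T) t)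
    (hv : ∀ t ∈ Set.Icc 0 T,
      HasDerivWithinAt v
        (fv (q t) (v t) (u t) -
          (φf (q t) (v t) (u t) / D (q t)) • ((M (q t))⁻¹ *ᵥ n (q t)))
        (Set.Icc 0 T) t)
    (hnne : ∀ t ∈ Set.Icc 0 T, n (q t) ≠ 0)
    (hinit1 : fc (q 0) = 0) (hinit2 : n (q 0) ⬝ᵥ v 0 = 0) :
    ∀ t ∈ Set.Icc 0 T, fc (q t) = 0 ∧ n (q t) ⬝ᵥ v t = 0 := by
  have hD_ne : ∀ t ∈ Icc 0 T, D (q t) ≠ 0 := fun t ht =>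
    (hD (q t) ▸ (hM (q t)).dotProduct_inv_mulVec_pos (hnne t ht)).ne'
  have hvel : ∀ t ∈ Icc 0 T, HasDerivWithinAt (fun s => n (q s) ⬝ᵥ v s) 0 (Icc 0 T) t := by
    intro t ht
    convert hasDerivWithinAt_gradient_dotProduct hfc hn (hq t ht) (hv t ht) using 1
    rw [dotProduct_sub_div_smul_of_dotProduct_eq (hD (q t)).symm (hD_ne t ht), hφ]
    ring
  have hvel0 : ∀ t ∈ Icc 0 T, n (q t) ⬝ᵥ v t = 0 := fun t ht =>
    (eq_of_hasDerivWithinAt_zero_Icc hvel t ht).trans hinit2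
  have hpos : ∀ t ∈ Icc 0 T, HasDerivWithinAt (fun s => fc (q s)) 0 (Icc 0 T) t := by
    intro t ht
    have h := (hfc.differentiable two_ne_zero (q t)).hasFDerivAt.comp_hasDerivWithinAt t (hq t ht)
    rwa [hn, hvel0 t ht] at h
  exact fun t ht => ⟨(eq_of_hasDerivWithinAt_zero_Icc hpos t ht).trans hinit1, hvel0 t ht⟩

/-- Index reduction is exact: solutions of the index-reduced ODE
`q' = v`, `v' = f_v(q,v,u) - M(q)⁻¹ n(q) D(q)⁻¹ φ(x,u)` with consistent
initialization (`f_c(q(0)) = 0`, `n(q(0))ᵀ v(0) = 0`) satisfy the algebraic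
constraints `f_c(q(t)) = 0` and `n(q(t))ᵀ v(t) = 0` of the index-3 DAE for all
`t ∈ [0,T]`. -/
theorem stmt_7 (nq nu : ℕ) (hnq : 0 < nq)
    (fc : (Fin nq → ℝ) → ℝ) (hfc : ContDiff ℝ 2 fc)
    (n : (Fin nq → ℝ) → Fin nq → ℝ)
    (hn : ∀ p w, fderiv ℝ fc p w = n p ⬝ᵥ w)
    (M : (Fin nq → ℝ) → Matrix (Fin nq) (Fin nq) ℝ)
    (hM : ∀ p, (M p).PosDef)
    (fv : (Fin nq → ℝ) → (Fin nq → ℝ) → (Fin nu → ℝ) → Fin nq → ℝ)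
    (D : (Fin nq → ℝ) → ℝ)
    (hD : ∀ p, D p = n p ⬝ᵥ ((M p)⁻¹ *ᵥ n p))
    (φf : (Fin nq → ℝ) → (Fin nq → ℝ) → (Fin nu → ℝ) → ℝ)
    (hφ : ∀ p w uu, φf p w uu = n p ⬝ᵥ fv p w uu + fderiv ℝ (fun r => n r ⬝ᵥ w) p w)
    (T : ℝ) (hT : 0 ≤ T)
    (q v : ℝ → Fin nq → ℝ) (u : ℝ → Fin nu → ℝ)
    (hq : ∀ t ∈ Set.Icc 0 T, HasDerivWithinAt q (v t) (Set.Icc 0 T) t)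
    (hv : ∀ t ∈ Set.Icc 0 T,
      HasDerivWithinAt v
        (fv (q t) (v t) (u t) -
          (φf (q t) (v t) (u t) / D (q t)) • ((M (q t))⁻¹ *ᵥ n (q t)))
        (Set.Icc 0 T) t)
    (hnne : ∀ t ∈ Set.Icc 0 T, n (q t) ≠ 0)
    (hinit1 : fc (q 0) = 0) (hinit2 : n (q 0) ⬝ᵥ v 0 = 0) :
    ∀ t ∈ Set.Icc 0 T, fc (q t) = 0 ∧ n (q t) ⬝ᵥ v t = 0 :=
  stmt_7_general nq nu fc hfc n hn M hM fv D hD φf hφ T q v u hq hv hnne hinit1 hinit2
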